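/- arXiv:2504.16238 — 4 statements merged into one kernel-verified Lean document; each statement's English description precedes it below -/
import Mathlib

section
/- Let y, f, g, h ∈ ℝⁿ, let La : ℝⁿ → ℝ be any fairness loss function, and let λ ∈ ℝ. Let L(u, v) = Σᵢ (uᵢ − vᵢ)² denote the MSE loss and define the adjuster objective L_O(u) = Σᵢ uᵢ² + λ · La(f + u). Assume (i) equal fairness: La(h) = La(f + g); and (ii) optimality of the adjuster relative to h − f: L_O(g) ≤ L_O(h − f). Then the difference in MSE loss satisfies L(f + g, y) − L(h, y) ≤ 2 Σᵢ (fᵢ − yᵢ)·(gᵢ − (hᵢ − fᵢ)), i.e. L(f + g, y) − L(h, y) ≤ 2 (f − y)ᵀ (g − (h − f)). -/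
/-!
Writing both predictions as offsets of the baseline `f`, the MSE gap is
`‖g‖² − ‖h − f‖² + 2 ⟨f − y, g − (h − f)⟩`. Equal fairness makes the `λ`-terms of the two
adjuster objectives coincide, so optimality of `g` says exactly `‖g‖² ≤ ‖h − f‖²`.
-/

open Finset

/-- The mean squared error loss `L(u, v) = ∑ i, (uᵢ - vᵢ)²`. -/
def mseLoss {n : ℕ} (u v : Fin n → ℝ) : ℝ := ∑ i, (u i - v i) ^ 2

theorem mseLoss_add_sub_mseLoss_add {n : ℕ} (f u v y : Fin n → ℝ) :
    mseLoss (f + u) y - mseLoss (f + v) y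
      = ∑ i, u i ^ 2 - ∑ i, v i ^ 2 + 2 * ∑ i, (f i - y i) * (u i - v i) := by
  simp only [mseLoss, mul_sum, ← sum_sub_distrib, ← sum_add_distrib]
  refine sum_congr rfl fun i _ => ?_
  simp only [Pi.add_apply]
  ring

/-- Under (i) equal fairness `La(h) = La(f + g)` and (ii) optimality of the
adjuster relative to `h − f` for the adjuster objective `L_O(u) = ∑ i, uᵢ² + λ·La(f + u)`,
we have `L(f + g, y) − L(h, y) ≤ 2 ∑ i, (fᵢ − yᵢ)·(gᵢ − (hᵢ − fᵢ))`. -/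
theorem adjuster_mse_bound {n : ℕ} (y f g h : Fin n → ℝ)
    (La : (Fin n → ℝ) → ℝ) (lam : ℝ)
    (L_O : (Fin n → ℝ) → ℝ)
    (hLO : ∀ u, L_O u = (∑ i, (u i) ^ 2) + lam * La (f + u))
    (hfair : La h = La (f + g))
    (hopt : L_O g ≤ L_O (h - f)) :
    mseLoss (f + g) y - mseLoss h y
      ≤ 2 * ∑ i, (f i - y i) * (g i - (h i - f i)) := by
  have hsq : ∑ i, g i ^ 2 ≤ ∑ i, (h - f) i ^ 2 := by
    rw [hLO, hLO, add_sub_cancel, hfair] at hopt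
    linarith
  calc mseLoss (f + g) y - mseLoss h y
      = mseLoss (f + g) y - mseLoss (f + (h - f)) y := by rw [add_sub_cancel]
    _ = ∑ i, g i ^ 2 - ∑ i, (h - f) i ^ 2 + 2 * ∑ i, (f i - y i) * (g i - (h i - f i)) :=
        mseLoss_add_sub_mseLoss_add f g (h - f) y
    _ ≤ 2 * ∑ i, (f i - y i) * (g i - (h i - f i)) := by linarith
end

section
/- Let X be an n × d real matrix with XᵀX invertible, y ∈ ℝⁿ, λ ∈ ℝ, and let La : ℝⁿ → ℝ be differentiable with gradient ∇La. Let β_f = (XᵀX)⁻¹ Xᵀ y be the ordinary least squares solution, and suppose β_a ∈ ℝᵈ satisfies the first-order condition of the adversarial debiasing objective: 2 Xᵀ (X β_a − y) + λ Xᵀ ∇La(X β_a) = 0. Then β_g := β_a − β_f satisfies the first-order condition of the adjuster objective: 2 XᵀX β_g + λ Xᵀ ∇La(X β_f + X β_g) = 0. -/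
open Matrix

theorem Matrix.gram_mulVec_sub_leastSquares {R m n : Type*} [CommRing R] [Fintype m] [Fintype n]
    [DecidableEq n] (X : Matrix m n R) [Invertible (Xᵀ * X)] (y : m → R) (β : n → R) :
    (Xᵀ * X) *ᵥ (β - (Xᵀ * X)⁻¹ *ᵥ (Xᵀ *ᵥ y)) = Xᵀ *ᵥ (X *ᵥ β - y) := by
  rw [mulVec_sub, mulVec_mulVec, mul_inv_of_invertible, one_mulVec, mulVec_sub, mulVec_mulVec]

theorem adjuster_first_order_condition_general {n d : ℕ}
    (X : Matrix (Fin n) (Fin d) ℝ) (y : Fin n → ℝ) (lam : ℝ)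
    (gradLa : (Fin n → ℝ) → (Fin n → ℝ))
    (hinv : Invertible (Xᵀ * X))
    (β_f : Fin d → ℝ) (hβf : β_f = (Xᵀ * X)⁻¹ *ᵥ (Xᵀ *ᵥ y))
    (β_a : Fin d → ℝ)
    (hFOC : (2 : ℝ) • (Xᵀ *ᵥ (X *ᵥ β_a - y)) + lam • (Xᵀ *ᵥ gradLa (X *ᵥ β_a)) = 0) :
    (2 : ℝ) • ((Xᵀ * X) *ᵥ (β_a - β_f))
      + lam • (Xᵀ *ᵥ gradLa (X *ᵥ β_f + X *ᵥ (β_a - β_f))) = 0 := by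
  rw [← mulVec_add, add_sub_cancel, hβf, gram_mulVec_sub_leastSquares, hFOC]

/-- Let `X` be an `n × d` real matrix with `XᵀX` invertible, `y ∈ ℝⁿ`, `λ ∈ ℝ`,
and let `La : ℝⁿ → ℝ` be differentiable with gradient `∇La` (i.e. the Fréchet derivative of
`La` at `u` is `v ↦ ∑ i, ∇La(u)ᵢ vᵢ`).
Let `β_f = (XᵀX)⁻¹ Xᵀ y` be the OLS solution and suppose `β_a` satisfies the first-order
condition of the adversarial debiasing objective:
`2 Xᵀ (X β_a − y) + λ Xᵀ ∇La(X β_a) = 0`.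
Then `β_g := β_a − β_f` satisfies the first-order condition of the adjuster objective:
`2 XᵀX β_g + λ Xᵀ ∇La(X β_f + X β_g) = 0`. -/
theorem adjuster_first_order_condition {n d : ℕ}
    (X : Matrix (Fin n) (Fin d) ℝ) (y : Fin n → ℝ) (lam : ℝ)
    (La : (Fin n → ℝ) → ℝ) (gradLa : (Fin n → ℝ) → (Fin n → ℝ))
    (hLa : ∀ u : Fin n → ℝ,
      HasFDerivAt La (∑ i, gradLa u i • ContinuousLinearMap.proj (R := ℝ) (φ := fun _ : Fin n => ℝ) i) u)
    (hinv : Invertible (Xᵀ * X))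
    (β_f : Fin d → ℝ) (hβf : β_f = (Xᵀ * X)⁻¹ *ᵥ (Xᵀ *ᵥ y))
    (β_a : Fin d → ℝ)
    (hFOC : (2 : ℝ) • (Xᵀ *ᵥ (X *ᵥ β_a - y)) + lam • (Xᵀ *ᵥ gradLa (X *ᵥ β_a)) = 0) :
    (2 : ℝ) • ((Xᵀ * X) *ᵥ (β_a - β_f))
      + lam • (Xᵀ *ᵥ gradLa (X *ᵥ β_f + X *ᵥ (β_a - β_f))) = 0 :=
  adjuster_first_order_condition_general X y lam gradLa hinv β_f hβf β_a hFOC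
end

section
/- Let X be an n × d real matrix with XᵀX invertible, y ∈ ℝⁿ, λ ≥ 0, and let La : ℝⁿ → ℝ be convex and differentiable. Define L_AD(β) = ‖Xβ − y‖² + λ·La(Xβ) and, with β_f = (XᵀX)⁻¹Xᵀy and ŷ = Xβ_f, define L_O(β) = ‖Xβ‖² + λ·La(ŷ + Xβ). If β_a is a global minimizer of L_AD, then β_g := β_a − β_f is a global minimizer of L_O; that is, the adjuster solution coincides with the adversarial debiasing solution in the sense that ŷ + X β_g = X β_a. -/
open Matrix

/-! The least-squares residual `ŷ - y` is orthogonal to the column space of `X` (normal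
equations), so by Pythagoras `‖X(β + β_f) - y‖² = ‖Xβ‖² + ‖ŷ - y‖²`, while
`X(β + β_f) = ŷ + Xβ`. Hence `L_AD(β + β_f) = L_O(β) + ‖ŷ - y‖²`: the two objectives differ by
the shift `β ↦ β + β_f` and a constant, so they have corresponding minimizers. -/

section LeastSquares

variable {R m n : Type*} [CommRing R] [Fintype m] [Fintype n]

theorem transpose_mulVec_leastSquares_residual [DecidableEq n] (X : Matrix m n R)
    [Invertible (Xᵀ * X)] (y : m → R) :
    Xᵀ *ᵥ (X *ᵥ ((Xᵀ * X)⁻¹ *ᵥ (Xᵀ *ᵥ y)) - y) = 0 := by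
  rw [mulVec_sub, mulVec_mulVec, mulVec_mulVec, mul_inv_of_invertible, one_mulVec, sub_self]

theorem sum_sq_mulVec_add_of_transpose_mulVec_eq_zero (X : Matrix m n R) (b : n → R)
    {r : m → R} (hr : Xᵀ *ᵥ r = 0) :
    ∑ i, (X *ᵥ b + r) i ^ 2 = ∑ i, (X *ᵥ b) i ^ 2 + ∑ i, r i ^ 2 := by
  have horth : ∑ i, (X *ᵥ b) i * r i = 0 := by
    change (X *ᵥ b) ⬝ᵥ r = 0
    rw [dotProduct_comm, dotProduct_mulVec, ← mulVec_transpose, hr, zero_dotProduct]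
  simp only [Pi.add_apply, add_sq, Finset.sum_add_distrib, mul_assoc, ← Finset.mul_sum, horth]
  ring

end LeastSquares

theorem adjuster_coincides_with_AD_general {n d : ℕ}
    (X : Matrix (Fin n) (Fin d) ℝ) (y : Fin n → ℝ) (lam : ℝ)
    (La : (Fin n → ℝ) → ℝ)
    (hinv : Invertible (Xᵀ * X))
    (β_f : Fin d → ℝ) (hβf : β_f = (Xᵀ * X)⁻¹ *ᵥ (Xᵀ *ᵥ y))
    (yhat : Fin n → ℝ) (hyhat : yhat = X *ᵥ β_f)
    (L_AD L_O : (Fin d → ℝ) → ℝ)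
    (hLAD : ∀ β, L_AD β = (∑ i, (X *ᵥ β - y) i ^ 2) + lam * La (X *ᵥ β))
    (hLO : ∀ β, L_O β = (∑ i, (X *ᵥ β) i ^ 2) + lam * La (yhat + X *ᵥ β))
    (β_a : Fin d → ℝ) (hmin : ∀ β, L_AD β_a ≤ L_AD β) :
    (∀ β, L_O (β_a - β_f) ≤ L_O β) ∧ yhat + X *ᵥ (β_a - β_f) = X *ᵥ β_a := by
  have hnormal : Xᵀ *ᵥ (yhat - y) = 0 := by
    rw [hyhat, hβf]
    exact transpose_mulVec_leastSquares_residual X y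
  have hshift : ∀ β, L_AD (β + β_f) = L_O β + ∑ i, (yhat - y) i ^ 2 := by
    intro β
    rw [hLAD, hLO, mulVec_add, ← hyhat, add_sub_assoc,
      sum_sq_mulVec_add_of_transpose_mulVec_eq_zero X β hnormal, add_comm yhat]
    ring
  refine ⟨fun β => ?_, by rw [mulVec_sub, ← hyhat]; abel⟩
  have h := hmin (β + β_f)
  rw [← sub_add_cancel β_a β_f, hshift, hshift] at h
  linarith

/-- With `XᵀX` invertible, `λ ≥ 0`, and `La` convex and differentiable, define
`L_AD(β) = ‖Xβ − y‖² + λ·La(Xβ)` and, with `β_f = (XᵀX)⁻¹Xᵀy` and `ŷ = Xβ_f`,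
`L_O(β) = ‖Xβ‖² + λ·La(ŷ + Xβ)`.  If `β_a` is a global minimizer of `L_AD`, then
`β_g := β_a − β_f` is a global minimizer of `L_O`, and `ŷ + X β_g = X β_a`. -/
theorem adjuster_coincides_with_AD {n d : ℕ}
    (X : Matrix (Fin n) (Fin d) ℝ) (y : Fin n → ℝ) (lam : ℝ) (hlam : 0 ≤ lam)
    (La : (Fin n → ℝ) → ℝ)
    (hconv : ConvexOn ℝ Set.univ La)
    (hdiff : Differentiable ℝ La)
    (hinv : Invertible (Xᵀ * X))
    (β_f : Fin d → ℝ) (hβf : β_f = (Xᵀ * X)⁻¹ *ᵥ (Xᵀ *ᵥ y))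
    (yhat : Fin n → ℝ) (hyhat : yhat = X *ᵥ β_f)
    (L_AD L_O : (Fin d → ℝ) → ℝ)
    (hLAD : ∀ β, L_AD β = (∑ i, (X *ᵥ β - y) i ^ 2) + lam * La (X *ᵥ β))
    (hLO : ∀ β, L_O β = (∑ i, (X *ᵥ β) i ^ 2) + lam * La (yhat + X *ᵥ β))
    (β_a : Fin d → ℝ) (hmin : ∀ β, L_AD β_a ≤ L_AD β) :
    (∀ β, L_O (β_a - β_f) ≤ L_O β) ∧ yhat + X *ᵥ (β_a - β_f) = X *ᵥ β_a :=
  adjuster_coincides_with_AD_general X y lam La hinv β_f hβf yhat hyhat L_AD L_O hLAD hLO β_a hmin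
end

section
/- Let σ(z) = 1/(1 + e^{−z}) and BCE(u, w) = −Σᵢ [wᵢ ln σ(uᵢ) + (1 − wᵢ) ln(1 − σ(uᵢ))]. Let f, g, h, y ∈ ℝⁿ and set ŷᵢ = σ(fᵢ). If BCE(f + g, ŷ) ≤ BCE(h, ŷ), then BCE(f + g, y) ≤ BCE(h, y) + Σᵢ (σ(fᵢ) − yᵢ) · (gᵢ − (hᵢ − fᵢ)), i.e. BCE(f + g, y) ≤ BCE(h, y) + (σ(f) − y)ᵀ [g − (h − f)]. -/
/-- The logistic sigmoid `σ(z) = 1/(1 + e^{-z})`. -/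
noncomputable def sigmoid (z : ℝ) : ℝ := 1 / (1 + Real.exp (-z))

/-- The binary cross-entropy of logits `u` against (possibly soft) labels `w`:
`BCE(u, w) = −∑ i, [wᵢ ln σ(uᵢ) + (1 − wᵢ) ln(1 − σ(uᵢ))]`. -/
noncomputable def bce {n : ℕ} (u w : Fin n → ℝ) : ℝ :=
  -∑ i, (w i * Real.log (sigmoid (u i)) + (1 - w i) * Real.log (1 - sigmoid (u i)))

/-!
The cross-entropy `BCE(u, w)` is affine in the labels `w`, and its slope in `wᵢ` is minus the
log-odds `ln σ(uᵢ) − ln(1 − σ(uᵢ)) = uᵢ`. Hence moving the labels from `ŷ` to `y` adds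
`∑ᵢ (ŷᵢ − yᵢ) uᵢ` to `BCE(u, ·)`, and comparing `u = f + g` with `u = h` turns the hypothesis into
the claim.
-/

open Finset

theorem log_sigmoid_sub_log_one_sub_sigmoid (z : ℝ) :
    Real.log (sigmoid z) - Real.log (1 - sigmoid z) = z := by
  have hpos : 0 < 1 + Real.exp (-z) := by positivity
  have hcompl : 1 - sigmoid z = Real.exp (-z) / (1 + Real.exp (-z)) := by
    unfold sigmoid
    field_simp
    ring
  rw [hcompl, sigmoid, Real.log_div one_ne_zero hpos.ne',
    Real.log_div (Real.exp_ne_zero _) hpos.ne', Real.log_one, Real.log_exp]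
  ring

theorem bce_eq_bce_add_sum {n : ℕ} (u y w : Fin n → ℝ) :
    bce u y = bce u w + ∑ i, (w i - y i) * u i := by
  have hterm : ∀ i, y i * Real.log (sigmoid (u i)) + (1 - y i) * Real.log (1 - sigmoid (u i)) =
      (w i * Real.log (sigmoid (u i)) + (1 - w i) * Real.log (1 - sigmoid (u i))) -
        (w i - y i) * u i :=
    fun i => by linear_combination (y i - w i) * log_sigmoid_sub_log_one_sub_sigmoid (u i)
  rw [bce, bce, sum_congr rfl fun i _ => hterm i, sum_sub_distrib]
  ring

theorem bce_sub_bce_eq {n : ℕ} (u v y w : Fin n → ℝ) :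
    bce u y - bce v y = bce u w - bce v w + ∑ i, (w i - y i) * (u i - v i) := by
  simp only [bce_eq_bce_add_sum u y w, bce_eq_bce_add_sum v y w, mul_sub, sum_sub_distrib]
  ring

/-- With pseudo-labels `ŷᵢ = σ(fᵢ)`, if `BCE(f + g, ŷ) ≤ BCE(h, ŷ)`, then
`BCE(f + g, y) ≤ BCE(h, y) + ∑ i, (σ(fᵢ) − yᵢ)·(gᵢ − (hᵢ − fᵢ))`. -/
theorem bce_adjuster_bound {n : ℕ} (f g h y : Fin n → ℝ)
    (yhat : Fin n → ℝ) (hyhat : ∀ i, yhat i = sigmoid (f i))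
    (hle : bce (f + g) yhat ≤ bce h yhat) :
    bce (f + g) y ≤ bce h y + ∑ i, (sigmoid (f i) - y i) * (g i - (h i - f i)) := by
  have hshift : ∑ i, (yhat i - y i) * ((f + g) i - h i) =
      ∑ i, (sigmoid (f i) - y i) * (g i - (h i - f i)) :=
    sum_congr rfl fun i _ => by rw [hyhat i, Pi.add_apply]; ring
  linarith [bce_sub_bce_eq (f + g) h y yhat]
end
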